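/- Let n ≥ 3, let K ⊆ ℝⁿ be a proper subdual cone, let A ∈ ℝ^{n×n} be symmetric, and let {v¹, …, vⁿ} be an orthonormal system of eigenvectors of A with A vⁱ = λᵢ vⁱ and λ₁ < λ₂ ≤ ⋯ ≤ λₙ. Suppose v¹ ∈ int(K*) and there exists η > 0 such that ⟨v³, y⟩² + ⋯ + ⟨vⁿ, y⟩² ≤ η·⟨v¹, y⟩² for every y ∈ S^{n−1} ∩ K, and that λₙ ≤ λ₂ + (1/η)(λ₂ − λ₁). Then λ₂Iₙ − A is K-copositive, and consequently the sublevel set [φ_A ≤ c] = {x ∈ int(K) : ⟨Ax, x⟩ ≤ c‖x‖²} is convex for every c ∈ ℝ (i.e., q_A is spherically quasi-convex). -/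

import Mathlib

/-!
For `c ≥ λ₂` copositivity of `λ₂Iₙ - A` gives `c‖x‖² - ⟨Ax, x⟩ ≥ 0` on all of `K`, so the
sublevel set is `int K` itself. Copositivity follows in eigen-coordinates `dᵢ = ⟨vⁱ, x⟩`:
the positive term `(λ₂ - λ₁) d₁²` dominates `∑_{i≥3} (λᵢ - λ₂) dᵢ² ≤ (λₙ - λ₂) η d₁²`.

For `c < λ₂` the form `∑ᵢ (c - λᵢ) dᵢ²` has at most one positive coefficient, so on the half
space `d₁ ≥ 0` (which contains `K`, as `v¹ ∈ K*`) its nonnegativity set is a Lorentz cone.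
Such a cone is convex by the reverse Cauchy–Schwarz inequality of Aczél.

Indices follow the paper here; in the code they start at `0`, so `λ₁` is `lam 0`.
-/

open scoped RealInnerProductSpace

/-- The quadratic form `x ↦ ⟨A x, x⟩` associated with a matrix `A`. -/
noncomputable def quadForm {n : ℕ} (A : Matrix (Fin n) (Fin n) ℝ)
    (x : EuclideanSpace ℝ (Fin n)) : ℝ :=
  ⟪Matrix.toEuclideanLin A x, x⟫

/-- `K` is a cone: closed under multiplication by positive scalars. -/
def IsCone {n : ℕ} (K : Set (EuclideanSpace ℝ (Fin n))) : Prop :=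
  ∀ ⦃t : ℝ⦄, 0 < t → ∀ ⦃x⦄, x ∈ K → t • x ∈ K

/-- A proper cone: a pointed closed convex cone with nonempty interior. -/
def IsProperCone {n : ℕ} (K : Set (EuclideanSpace ℝ (Fin n))) : Prop :=
  IsCone K ∧ Convex ℝ K ∧ IsClosed K ∧ K ∩ (-K) ⊆ {0} ∧ (interior K).Nonempty

/-- The dual cone `K* = {u : ⟨u, y⟩ ≥ 0 for all y ∈ K}`. -/
def dualCone {n : ℕ} (K : Set (EuclideanSpace ℝ (Fin n))) : Set (EuclideanSpace ℝ (Fin n)) :=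
  {u | ∀ y ∈ K, 0 ≤ ⟪u, y⟫}

/-- The sublevel set `[φ_A ≤ c] = {x ∈ int K : ⟨A x, x⟩ ≤ c ‖x‖²}`. -/
noncomputable def sublevel {n : ℕ} (A : Matrix (Fin n) (Fin n) ℝ)
    (K : Set (EuclideanSpace ℝ (Fin n))) (c : ℝ) : Set (EuclideanSpace ℝ (Fin n)) :=
  {x ∈ interior K | quadForm A x ≤ c * ‖x‖ ^ 2}

open Finset

/-- Aczél's reverse Cauchy–Schwarz inequality. -/
theorem sum_mul_mul_le_of_sum_mul_sq_le {ι : Type*} {s : Finset ι} {μ x y : ι → ℝ} {α x₀ y₀ : ℝ}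
    (hμ : ∀ i ∈ s, 0 ≤ μ i) (hx₀ : 0 ≤ x₀) (hy₀ : 0 ≤ y₀)
    (hx : ∑ i ∈ s, μ i * x i ^ 2 ≤ α * x₀ ^ 2) (hy : ∑ i ∈ s, μ i * y i ^ 2 ≤ α * y₀ ^ 2) :
    ∑ i ∈ s, μ i * (x i * y i) ≤ α * (x₀ * y₀) := by
  have hX : 0 ≤ ∑ i ∈ s, μ i * x i ^ 2 := sum_nonneg fun i hi => mul_nonneg (hμ i hi) (sq_nonneg _)
  have hY : 0 ≤ ∑ i ∈ s, μ i * y i ^ 2 := sum_nonneg fun i hi => mul_nonneg (hμ i hi) (sq_nonneg _)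
  have hcs : (∑ i ∈ s, μ i * (x i * y i)) ^ 2 ≤ (∑ i ∈ s, μ i * x i ^ 2) * ∑ i ∈ s, μ i * y i ^ 2 :=
    sum_sq_le_sum_mul_sum_of_sq_le_mul s (fun i hi => mul_nonneg (hμ i hi) (sq_nonneg _))
      (fun i hi => mul_nonneg (hμ i hi) (sq_nonneg _)) fun i _ => le_of_eq (by ring)
  have hαx : 0 ≤ α * x₀ ^ 2 := hX.trans hx
  have hαy : 0 ≤ α * y₀ ^ 2 := hY.trans hy
  have hα : 0 ≤ α * (x₀ * y₀) := by
    rcases hx₀.eq_or_lt with rfl | hx₀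
    · simp
    · exact mul_nonneg (nonneg_of_mul_nonneg_left hαx (by positivity)) (by positivity)
  refine le_of_sq_le_sq (hcs.trans ?_) hα
  calc (∑ i ∈ s, μ i * x i ^ 2) * ∑ i ∈ s, μ i * y i ^ 2 ≤ (α * x₀ ^ 2) * (α * y₀ ^ 2) :=
        mul_le_mul hx hy hY hαx
    _ = (α * (x₀ * y₀)) ^ 2 := by ring

def lorentzCone {ι : Type*} [Fintype ι] (w : ι → ℝ) (i₀ : ι) : Set (ι → ℝ) :=
  {t | 0 ≤ t i₀ ∧ 0 ≤ ∑ i, w i * t i ^ 2}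

section Lorentz

variable {ι : Type*} [Fintype ι] [DecidableEq ι] {w : ι → ℝ} {i₀ : ι}

theorem sum_mul_mul_nonneg_of_mem_lorentzCone (hw : ∀ i ≠ i₀, w i ≤ 0) {x y : ι → ℝ}
    (hx : x ∈ lorentzCone w i₀) (hy : y ∈ lorentzCone w i₀) :
    0 ≤ ∑ i, w i * (x i * y i) := by
  have split : ∀ f : ι → ℝ, ∑ i, w i * f i
      = w i₀ * f i₀ - ∑ i ∈ univ.erase i₀, -w i * f i := fun f => by
    rw [← add_sum_erase _ _ (mem_univ i₀)]; simp [sum_neg_distrib]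
  have hμ : ∀ i ∈ univ.erase i₀, 0 ≤ -w i := fun i hi => neg_nonneg.2 (hw i (ne_of_mem_erase hi))
  obtain ⟨hx₀, hxQ⟩ := hx
  obtain ⟨hy₀, hyQ⟩ := hy
  rw [split] at hxQ hyQ ⊢
  exact sub_nonneg.2 <|
    sum_mul_mul_le_of_sum_mul_sq_le hμ hx₀ hy₀ (sub_nonneg.1 hxQ) (sub_nonneg.1 hyQ)

theorem convex_lorentzCone (hw : ∀ i ≠ i₀, w i ≤ 0) : Convex ℝ (lorentzCone w i₀) := by
  intro x hx y hy a b ha hb _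
  have expand : ∑ i, w i * (a • x + b • y) i ^ 2 = a ^ 2 * ∑ i, w i * x i ^ 2
      + b ^ 2 * ∑ i, w i * y i ^ 2 + 2 * a * b * ∑ i, w i * (x i * y i) := by
    simp only [mul_sum, ← sum_add_distrib]
    exact sum_congr rfl fun i _ => by simp only [Pi.add_apply, Pi.smul_apply, smul_eq_mul]; ring
  refine ⟨by simpa using add_nonneg (mul_nonneg ha hx.1) (mul_nonneg hb hy.1), ?_⟩
  rw [expand]
  exact add_nonneg (add_nonneg (mul_nonneg (sq_nonneg a) hx.2) (mul_nonneg (sq_nonneg b) hy.2))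
    (mul_nonneg (by positivity) (sum_mul_mul_nonneg_of_mem_lorentzCone hw hx hy))

end Lorentz

theorem LinearMap.IsSymmetric.inner_apply_self_eq_sum {E ι : Type*} [NormedAddCommGroup E]
    [InnerProductSpace ℝ E] [Fintype ι] {T : E →ₗ[ℝ] E} (hT : T.IsSymmetric)
    (b : OrthonormalBasis ι ℝ E) {lam : ι → ℝ} (hb : ∀ i, T (b i) = lam i • b i) (x : E) :
    ⟪T x, x⟫ = ∑ i, lam i * ⟪b i, x⟫ ^ 2 := by
  rw [← b.sum_inner_mul_inner]
  refine sum_congr rfl fun i _ => ?_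
  rw [hT, hb, real_inner_smul_right, real_inner_comm]
  ring

theorem quadForm_smul_one_sub {n : ℕ} (A : Matrix (Fin n) (Fin n) ℝ) (c : ℝ)
    (x : EuclideanSpace ℝ (Fin n)) :
    quadForm (c • 1 - A) x = c * ‖x‖ ^ 2 - quadForm A x := by
  simp [quadForm, inner_sub_left, real_inner_smul_left]

theorem mul_norm_sq_sub_quadForm_eq_sum {n : ℕ} {A : Matrix (Fin n) (Fin n) ℝ} (hA : A.IsSymm)
    {v : Fin n → EuclideanSpace ℝ (Fin n)} (hv : Orthonormal ℝ v) {lam : Fin n → ℝ}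
    (heig : ∀ i, Matrix.toEuclideanLin A (v i) = lam i • v i) (c : ℝ)
    (x : EuclideanSpace ℝ (Fin n)) :
    c * ‖x‖ ^ 2 - quadForm A x = ∑ i, (c - lam i) * ⟪v i, x⟫ ^ 2 := by
  let b := OrthonormalBasis.mk hv
    (hv.linearIndependent.span_eq_top_of_card_eq_finrank' (by simp)).ge
  have hb : ⇑b = v := OrthonormalBasis.coe_mk hv _
  have hsymm : (Matrix.toEuclideanLin A).IsSymmetric :=
    Matrix.isSymmetric_toEuclideanLin_iff.mpr (Matrix.isHermitian_iff_isSymm.mpr hA)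
  rw [quadForm, hsymm.inner_apply_self_eq_sum b (hb ▸ heig), ← b.sum_sq_inner_right, hb,
    mul_sum, ← sum_sub_distrib]
  exact sum_congr rfl fun i _ => by ring

theorem sum_sub_mul_sq_nonneg {ι : Type*} [Fintype ι] [DecidableEq ι] {lam d : ι → ℝ}
    {i₀ i₁ : ι} (h : i₁ ≠ i₀) {L η : ℝ} (hL : ∀ i, lam i ≤ L)
    (hd : ∑ i ∈ (univ.erase i₀).erase i₁, d i ^ 2 ≤ η * d i₀ ^ 2)
    (hgap : η * (L - lam i₁) ≤ lam i₁ - lam i₀) :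
    0 ≤ ∑ i, (lam i₁ - lam i) * d i ^ 2 := by
  have split : ∑ i, (lam i₁ - lam i) * d i ^ 2 = (lam i₁ - lam i₀) * d i₀ ^ 2
      - ∑ i ∈ (univ.erase i₀).erase i₁, (lam i - lam i₁) * d i ^ 2 := by
    rw [← add_sum_erase _ _ (mem_univ i₀), ← add_sum_erase _ _ (mem_erase.2 ⟨h, mem_univ i₁⟩)]
    simp only [sub_self, zero_mul, zero_add, sub_eq_add_neg, ← sum_neg_distrib]
    exact congrArg _ (sum_congr rfl fun i _ => by ring)
  have hL₁ : 0 ≤ L - lam i₁ := sub_nonneg.2 (hL i₁)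
  have tail : ∑ i ∈ (univ.erase i₀).erase i₁, (lam i - lam i₁) * d i ^ 2
      ≤ (lam i₁ - lam i₀) * d i₀ ^ 2 :=
    calc ∑ i ∈ (univ.erase i₀).erase i₁, (lam i - lam i₁) * d i ^ 2
        ≤ (L - lam i₁) * ∑ i ∈ (univ.erase i₀).erase i₁, d i ^ 2 := by
          rw [mul_sum]
          exact sum_le_sum fun i _ => mul_le_mul_of_nonneg_right (by linarith [hL i]) (sq_nonneg _)
      _ ≤ (L - lam i₁) * (η * d i₀ ^ 2) := mul_le_mul_of_nonneg_left hd hL₁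
      _ = η * (L - lam i₁) * d i₀ ^ 2 := by ring
      _ ≤ (lam i₁ - lam i₀) * d i₀ ^ 2 := mul_le_mul_of_nonneg_right hgap (sq_nonneg _)
  linarith

theorem IsCone.sum_inner_sq_le_of_norm_eq_one {n : ℕ} {K : Set (EuclideanSpace ℝ (Fin n))}
    (hK : IsCone K) {ι : Type*} {s : Finset ι} {u : ι → EuclideanSpace ℝ (Fin n)}
    {u₀ : EuclideanSpace ℝ (Fin n)} {η : ℝ}
    (h : ∀ y ∈ K, ‖y‖ = 1 → ∑ i ∈ s, ⟪u i, y⟫ ^ 2 ≤ η * ⟪u₀, y⟫ ^ 2) {x : EuclideanSpace ℝ (Fin n)}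
    (hx : x ∈ K) : ∑ i ∈ s, ⟪u i, x⟫ ^ 2 ≤ η * ⟪u₀, x⟫ ^ 2 := by
  rcases eq_or_ne x 0 with rfl | hx₀
  · simp
  have hpos : 0 < ‖x‖ := norm_pos_iff.2 hx₀
  have hy := h _ (hK (inv_pos.2 hpos) hx) (by simp [norm_smul, hpos.ne'])
  simp only [real_inner_smul_right, mul_pow, ← mul_sum] at hy
  rw [mul_left_comm] at hy
  exact le_of_mul_le_mul_left hy (by positivity)

theorem sublevel_eq_interior {n : ℕ} {K : Set (EuclideanSpace ℝ (Fin n))}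
    {A : Matrix (Fin n) (Fin n) ℝ} {c₀ c : ℝ} (hcop : ∀ x ∈ K, 0 ≤ quadForm (c₀ • 1 - A) x)
    (hc : c₀ ≤ c) : sublevel A K c = interior K := by
  refine Set.sep_eq_self_iff_mem_true.2 fun x hx => ?_
  have := hcop x (interior_subset hx)
  rw [quadForm_smul_one_sub] at this
  nlinarith [sq_nonneg ‖x‖]

theorem convex_sublevel_of_le_eigenvalues_of_ne {n : ℕ} {K : Set (EuclideanSpace ℝ (Fin n))}
    (hK : Convex ℝ K) {A : Matrix (Fin n) (Fin n) ℝ} {ι : Type*} [Fintype ι] [DecidableEq ι]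
    {v : ι → EuclideanSpace ℝ (Fin n)} {lam : ι → ℝ} {i₀ : ι} {c : ℝ}
    (hexp : ∀ x, c * ‖x‖ ^ 2 - quadForm A x = ∑ i, (c - lam i) * ⟪v i, x⟫ ^ 2)
    (hv₀ : v i₀ ∈ dualCone K) (hc : ∀ i ≠ i₀, c ≤ lam i) : Convex ℝ (sublevel A K c) := by
  have hcoord : IsLinearMap ℝ fun x (i : ι) => ⟪v i, x⟫ :=
    ⟨fun x y => by ext; simp [inner_add_right], fun a x => by ext; simp [real_inner_smul_right]⟩
  have : sublevel A K c = interior K ∩ (fun x i => ⟪v i, x⟫) ⁻¹' lorentzCone (c - lam ·) i₀ := by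
    ext x
    simp only [sublevel, lorentzCone, Set.mem_inter_iff, Set.mem_preimage, Set.mem_ofPred_eq,
      ← hexp, sub_nonneg]
    exact ⟨fun h => ⟨h.1, hv₀ x (interior_subset h.1), h.2⟩, fun h => ⟨h.1, h.2.2⟩⟩
  rw [this]
  exact hK.interior.inter <|
    (convex_lorentzCone fun i hi => sub_nonpos.2 (hc i hi)).is_linear_preimage hcoord

/-- Theorem 3 of the paper (case `δ = 1/η`): if `v¹ ∈ int K*`,
`∑_{i≥3} ⟨vⁱ, y⟩² ≤ η ⟨v¹, y⟩²` on `S^{n-1} ∩ K` with `η > 0`, and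
`λₙ ≤ λ₂ + (1/η)(λ₂ - λ₁)`, then `λ₂Iₙ - A` is `K`-copositive and all sublevel sets
`[φ_A ≤ c]` are convex (i.e. `q_A` is spherically quasi-convex). -/
theorem stmt16 (n : ℕ) [NeZero n] (hn : 3 ≤ n)
    (K : Set (EuclideanSpace ℝ (Fin n))) (hK : IsProperCone K)
    (A : Matrix (Fin n) (Fin n) ℝ) (hA : A.IsSymm)
    (v : Fin n → EuclideanSpace ℝ (Fin n)) (hv : Orthonormal ℝ v)
    (lam : Fin n → ℝ) (heig : ∀ i, Matrix.toEuclideanLin A (v i) = lam i • v i)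
    (hmono : Monotone lam)
    (hv1 : v 0 ∈ interior (dualCone K))
    (η : ℝ) (hη : 0 < η)
    (hηb : ∀ y ∈ K, ‖y‖ = 1 →
      ∑ i ∈ (Finset.univ.erase 0).erase 1, ⟪v i, y⟫ ^ 2 ≤ η * ⟪v 0, y⟫ ^ 2)
    (hlam : lam ⟨n - 1, by omega⟩ ≤ lam 1 + (1 / η) * (lam 1 - lam 0)) :
    (∀ x ∈ K, 0 ≤ quadForm (lam 1 • (1 : Matrix (Fin n) (Fin n) ℝ) - A) x) ∧
      ∀ c : ℝ, Convex ℝ (sublevel A K c) := by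
  have hexp := mul_norm_sq_sub_quadForm_eq_sum hA hv heig
  have h10 : (1 : Fin n) ≠ 0 := by rw [Ne, Fin.one_eq_zero_iff]; omega
  have hgap : η * (lam ⟨n - 1, by omega⟩ - lam 1) ≤ lam 1 - lam 0 :=
    (le_div_iff₀' hη).1 (by rw [div_eq_inv_mul, ← one_div]; linarith)
  have hcop : ∀ x ∈ K, 0 ≤ quadForm (lam 1 • (1 : Matrix (Fin n) (Fin n) ℝ) - A) x := by
    intro x hx
    rw [quadForm_smul_one_sub, hexp]
    exact sum_sub_mul_sq_nonneg h10 (fun i => hmono (Fin.le_def.2 (Nat.le_sub_one_of_lt i.isLt)))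
      (hK.1.sum_inner_sq_le_of_norm_eq_one hηb hx) hgap
  refine ⟨hcop, fun c => ?_⟩
  rcases le_or_gt (lam 1) c with hc | hc
  · exact sublevel_eq_interior hcop hc ▸ hK.2.1.interior
  · exact convex_sublevel_of_le_eigenvalues_of_ne hK.2.1 (hexp c) (interior_subset hv1)
      fun i hi => hc.le.trans (hmono (Fin.one_le_of_ne_zero hi))
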